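/- arXiv:1606.04677 — 4 statements merged into one kernel-verified Lean document; each statement's English description precedes it below -/
import Mathlib

section
/- Let M(x) = [[x,1],[1,0]]. For integers a_1, ..., a_k, b_1, ..., b_l (with l ≥ 2), c_1, ..., c_m, the matrix product M(a_1)···M(a_k)·M(-b_1)···M(-b_l)·M(c_1)···M(c_m) equals (-1)^l times the matrix product M(a_1)···M(a_{k-1})·M(a_k - 1)·M(1)·M(b_1 - 1)·M(b_2)···M(b_{l-1})·M(b_l - 1)·M(1)·M(c_1 - 1)·M(c_2)···M(c_m). -/
/-- The matrix `M(x) = [[x,1],[1,0]]`. -/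
def cfMat (x : ℤ) : Matrix (Fin 2) (Fin 2) ℤ := !![x, 1; 1, 0]

/-- The product `M(x₁) ⋯ M(xₘ)`. -/
def cfMatProd (l : List ℤ) : Matrix (Fin 2) (Fin 2) ℤ := (l.map cfMat).prod

namespace CfAux

def D : Matrix (Fin 2) (Fin 2) ℤ := !![1, 0; 0, -1]

lemma prod_append (l₁ l₂ : List ℤ) :
    cfMatProd (l₁ ++ l₂) = cfMatProd l₁ * cfMatProd l₂ := by
  simp [cfMatProd]

lemma prod_cons (x : ℤ) (l : List ℤ) :
    cfMatProd (x :: l) = cfMat x * cfMatProd l := by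
  simp [cfMatProd]

lemma prod_nil : cfMatProd ([] : List ℤ) = 1 := rfl

lemma prod_singleton (x : ℤ) : cfMatProd [x] = cfMat x := by
  simp [cfMatProd]

lemma D_mul_D : D * D = 1 := by
  simp [D, Matrix.mul_fin_two]
  norm_num [← Matrix.one_fin_two]

lemma neg_eq (x : ℤ) : cfMat (-x) = -(D * cfMat x * D) := by
  simp [cfMat, D, Matrix.mul_fin_two]

lemma prod_neg (l : List ℤ) :
    cfMatProd (l.map (fun x => -x)) = ((-1 : ℤ) ^ l.length) • (D * cfMatProd l * D) := by
  induction l with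
  | nil => simp [prod_nil, D_mul_D]
  | cons x xs ih =>
      simp only [List.map_cons, prod_cons, List.length_cons, ih, neg_eq]
      rw [pow_succ]
      rw [mul_smul_comm, ← smul_smul]
      congr 1
      rw [neg_one_smul, neg_mul, neg_inj]
      calc D * cfMat x * D * (D * cfMatProd xs * D)
          = D * cfMat x * (D * D) * cfMatProd xs * D := by
            simp only [mul_assoc]
        _ = D * (cfMat x * cfMatProd xs) * D := by
            rw [D_mul_D]; simp only [mul_one, mul_assoc]

lemma key (a b : ℤ) : cfMat a * D * cfMat b = cfMat (a - 1) * cfMat 1 * cfMat (b - 1) := by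
  simp [cfMat, D, Matrix.mul_fin_two]
  ring_nf

end CfAux

/-- Lemma 3.4 (1), matrix form: with `b = b₁ :: bmid ++ [bₗ]` (so its length `l ≥ 2`) and
`c = c₁ :: cs`,
`M(a₁)⋯M(a_k) M(-b₁)⋯M(-bₗ) M(c₁)⋯M(cₘ)
  = (-1)^l · M(a₁)⋯M(a_{k-1}) M(a_k-1) M(1) M(b₁-1) M(b₂)⋯M(b_{l-1}) M(bₗ-1) M(1) M(c₁-1)
      M(c₂)⋯M(cₘ)`. -/
theorem cfMatProd_neg_block (la : List ℤ) (ak : ℤ) (b₁ : ℤ) (bmid : List ℤ) (bl : ℤ)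
    (c₁ : ℤ) (cs : List ℤ) :
    cfMatProd (la ++ [ak] ++ ((b₁ :: bmid ++ [bl]).map (fun x => -x)) ++ (c₁ :: cs)) =
      ((-1 : ℤ) ^ (bmid.length + 2)) •
        cfMatProd (la ++ [ak - 1, 1, b₁ - 1] ++ bmid ++ [bl - 1, 1, c₁ - 1] ++ cs) := by
  open CfAux in
  have hb : cfMatProd ((b₁ :: bmid ++ [bl]).map (fun x => -x)) =
      ((-1 : ℤ) ^ (bmid.length + 2)) •
        (D * (cfMat b₁ * cfMatProd bmid * cfMat bl) * D) := by
    rw [prod_neg]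
    congr 2
    · simp
    · rw [show (b₁ :: bmid ++ [bl]) = [b₁] ++ bmid ++ [bl] by simp,
        prod_append, prod_append, prod_singleton, prod_singleton]
  rw [prod_append, prod_append, hb, prod_cons]
  rw [mul_smul_comm, smul_mul_assoc]
  congr 1
  rw [show la ++ [ak - 1, 1, b₁ - 1] ++ bmid ++ [bl - 1, 1, c₁ - 1] ++ cs
      = la ++ ([ak - 1, 1, b₁ - 1] ++ (bmid ++ ([bl - 1, 1, c₁ - 1] ++ cs))) by simp,
    prod_append, prod_append, prod_append, prod_append]
  simp only [prod_cons, prod_singleton, prod_nil, mul_one]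
  have h1 := CfAux.key ak b₁
  have h2 := CfAux.key bl c₁
  calc cfMatProd la * cfMat ak *
        (D * (cfMat b₁ * cfMatProd bmid * cfMat bl) * D) *
        (cfMat c₁ * cfMatProd cs)
      = cfMatProd la * (cfMat ak * D * cfMat b₁) * cfMatProd bmid *
          (cfMat bl * D * cfMat c₁) * cfMatProd cs := by
        simp only [mul_assoc]
    _ = cfMatProd la * (cfMat (ak-1) * cfMat 1 * cfMat (b₁-1)) *
          cfMatProd bmid * (cfMat (bl-1) * cfMat 1 * cfMat (c₁-1)) * cfMatProd cs := by
        rw [h1, h2]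
    _ = _ := by
        simp only [prod_append, prod_cons, prod_singleton, prod_nil, mul_one, mul_assoc]
end

section
/- For integers a_1,...,a_k, b_1, c_1,...,c_m, the matrix product M(a_1)···M(a_k)·M(-b_1)·M(c_1)···M(c_m) equals (-1) times M(a_1)···M(a_{k-1})·M(a_k - 1)·M(1)·M(b_1 - 2)·M(1)·M(c_1 - 1)·M(c_2)···M(c_m), where M(x) = [[x,1],[1,0]]. -/
lemma cfMatProd_append (l₁ l₂ : List ℤ) :
    cfMatProd (l₁ ++ l₂) = cfMatProd l₁ * cfMatProd l₂ := by
  simp [cfMatProd, List.map_append, List.prod_append]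

lemma cfMat_key (ak b₁ c₁ : ℤ) :
    cfMat ak * cfMat (-b₁) * cfMat c₁ =
      (-1 : ℤ) • (cfMat (ak - 1) * cfMat 1 * cfMat (b₁ - 2) * cfMat 1 * cfMat (c₁ - 1)) := by
  simp only [cfMat]
  ext i j
  fin_cases i <;> fin_cases j <;> simp [Matrix.mul_apply, Fin.sum_univ_succ] <;> ring

/-- Lemma 3.4 (2), matrix form:
`M(a₁)⋯M(a_k) M(-b₁) M(c₁)⋯M(cₘ)
  = (-1) · M(a₁)⋯M(a_{k-1}) M(a_k-1) M(1) M(b₁-2) M(1) M(c₁-1) M(c₂)⋯M(cₘ)`. -/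
theorem cfMatProd_neg_single (la : List ℤ) (ak : ℤ) (b₁ : ℤ) (c₁ : ℤ) (cs : List ℤ) :
    cfMatProd (la ++ [ak, -b₁] ++ (c₁ :: cs)) =
      (-1 : ℤ) • cfMatProd (la ++ [ak - 1, 1, b₁ - 2, 1, c₁ - 1] ++ cs) := by
  have h1 : la ++ [ak, -b₁] ++ (c₁ :: cs) = la ++ ([ak, -b₁, c₁] ++ cs) := by simp
  have h2 : la ++ [ak - 1, 1, b₁ - 2, 1, c₁ - 1] ++ cs
      = la ++ ([ak - 1, 1, b₁ - 2, 1, c₁ - 1] ++ cs) := by simp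
  rw [h1, h2, cfMatProd_append, cfMatProd_append, cfMatProd_append, cfMatProd_append]
  have : cfMatProd [ak, -b₁, c₁] = (-1 : ℤ) • cfMatProd [ak - 1, 1, b₁ - 2, 1, c₁ - 1] := by
    simpa [cfMatProd, mul_assoc] using cfMat_key ak b₁ c₁
  rw [this]
  simp [Matrix.mul_smul, Matrix.smul_mul]
end

section
/- For integers a_1,...,a_k and b_1,...,b_l with l ≥ 2, the continued fractions satisfy [a_1,...,a_k, -b_1, -b_2, ..., -b_l] = [a_1,...,a_{k-1}, a_k - 1, 1, b_1 - 1, b_2, ..., b_l], whenever both sides are defined. -/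
/-!
Put `s = b₁ + [b₂, …, bₗ]`, so that the tail `[-b₁, …, -bₗ]` equals `-1/s`. The identity
`1 / (1 + 1 / (s - 1)) = 1 - 1 / s` rewrites `a_k - 1/s` as `(a_k - 1) + [1, b₁ - 1, b₂, …, bₗ]`;
since a continued fraction depends on its tail only through the tail's value, the prefix
`a₁, …, a_{k-1}` is carried along unchanged. Definedness of the two sides gives `s ≠ 0` and
`s - 1 ≠ 0`.
-/

/-- The continued fraction `[x₁,…,xₘ] = 1/(x₁ + 1/(x₂ + ⋯ + 1/xₘ))`. -/
def cf : List ℤ → ℚ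
  | [] => 0
  | x :: xs => 1 / ((x : ℚ) + cf xs)

/-- A continued fraction expansion is defined when no denominator appearing in the
recursive evaluation vanishes. -/
def cfDefined (l : List ℤ) : Prop :=
  ∀ (x : ℤ) (xs : List ℤ), (x :: xs) ∈ l.tails → (x : ℚ) + cf xs ≠ 0

lemma cf_map_neg (l : List ℤ) : cf (l.map (fun x => -x)) = -cf l := by
  induction l with
  | nil => simp [cf]
  | cons x xs ih =>
    simp only [List.map_cons, cf, ih]
    push_cast
    rw [← neg_add, one_div_neg_eq_neg_one_div]

lemma cf_append_congr_right (l : List ℤ) {s t : List ℤ} (h : cf s = cf t) :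
    cf (l ++ s) = cf (l ++ t) := by
  induction l with
  | nil => exact h
  | cons x xs ih => simp only [List.cons_append, cf, ih]

lemma cfDefined.add_cf_ne_zero {l : List ℤ} {x : ℤ} {xs : List ℤ}
    (h : cfDefined (l ++ x :: xs)) : (x : ℚ) + cf xs ≠ 0 :=
  h x xs ((List.mem_tails _ _).2 ⟨l, rfl⟩)

lemma one_div_one_add_one_div_sub_one {K : Type*} [Field K] {s : K} (hs : s ≠ 0)
    (hs₁ : s - 1 ≠ 0) : 1 / (1 + 1 / (s - 1)) = 1 - 1 / s := by
  rw [one_add_div hs₁, sub_add_cancel, one_div_div, sub_div, div_self hs]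

lemma cf_cons_neg_cons (a b : ℤ) (t : List ℤ) (hb : (b : ℚ) + cf t ≠ 0)
    (hb₁ : ((b - 1 : ℤ) : ℚ) + cf t ≠ 0) :
    cf (a :: -b :: t.map (fun x => -x)) = cf ((a - 1) :: 1 :: (b - 1) :: t) := by
  have hs₁ : (b + cf t : ℚ) - 1 ≠ 0 := by
    rwa [Int.cast_sub, Int.cast_one, sub_add_eq_add_sub] at hb₁
  simp only [cf, cf_map_neg, Int.cast_sub, Int.cast_neg, Int.cast_one]
  rw [sub_add_eq_add_sub (b : ℚ), one_div_one_add_one_div_sub_one hb hs₁, ← neg_add,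
    one_div_neg_eq_neg_one_div]
  ring

/-- Lemma 3.4 (3): for `l ≥ 2` (here the `b`-block is `b₁ :: bmid ++ [bₗ]`),
`[a₁,…,a_k, -b₁, -b₂, …, -bₗ] = [a₁,…,a_{k-1}, a_k - 1, 1, b₁ - 1, b₂, …, bₗ]`,
whenever both sides are defined. -/
theorem cf_neg_tail_block (la : List ℤ) (ak : ℤ) (b₁ : ℤ) (bmid : List ℤ) (bl : ℤ)
    (h₁ : cfDefined (la ++ [ak] ++ ((b₁ :: bmid ++ [bl]).map (fun x => -x))))
    (h₂ : cfDefined (la ++ [ak - 1, 1, b₁ - 1] ++ bmid ++ [bl])) :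
    cf (la ++ [ak] ++ ((b₁ :: bmid ++ [bl]).map (fun x => -x))) =
      cf (la ++ [ak - 1, 1, b₁ - 1] ++ bmid ++ [bl]) := by
  set t := bmid ++ [bl]
  have hlhs : la ++ [ak] ++ ((b₁ :: bmid ++ [bl]).map (fun x => -x)) =
      (la ++ [ak]) ++ -b₁ :: t.map (fun x => -x) := by simp [t]
  have hrhs : la ++ [ak - 1, 1, b₁ - 1] ++ bmid ++ [bl] =
      (la ++ [ak - 1, 1]) ++ (b₁ - 1) :: t := by simp [t]
  rw [hlhs] at h₁ ⊢
  rw [hrhs] at h₂ ⊢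
  have hb : (b₁ : ℚ) + cf t ≠ 0 := by
    have h := h₁.add_cf_ne_zero
    rwa [cf_map_neg, Int.cast_neg, ← neg_add, neg_ne_zero] at h
  have key := cf_cons_neg_cons ak b₁ t hb h₂.add_cf_ne_zero
  simpa using cf_append_congr_right la key
end

section
/- Let a = (a_1,...,a_{2n}) be a sequence of length 2n with each a_i ∈ {-2,0,2}, a_1 ≠ 0, a_{2n} ≠ 0, and such that whenever a_i = 0 (for 1 < i < 2n), a_{i-1} and a_{i+1} are both 2 or both -2. Let ℓ be the number of indices i with a_i = 0. After deleting the zeros (using the rule [...,x,0,y,...] = [...,x+y,...]) one obtains a sequence a' = (a'_1,...,a'_{2n'}) with all a'_i nonzero even integers, where n' = n - ℓ, and Σ_{i=1}^{2n'} |a'_i| = 2n + 2n'. -/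
/-- Deleting zeros in a continued fraction expansion: repeatedly replace a consecutive
triple `(x, 0, y)` by the single entry `x + y`. -/
def delZeros : List ℤ → List ℤ
  | x :: 0 :: y :: rest => delZeros ((x + y) :: rest)
  | x :: rest => x :: delZeros rest
  | [] => []
termination_by l => l.length

theorem delZeros_nil : delZeros [] = [] := by simp [delZeros]

theorem delZeros_singleton (x : ℤ) : delZeros [x] = [x] := by simp [delZeros]

theorem delZeros_cons_zero (x y : ℤ) (l : List ℤ) :
    delZeros (x :: 0 :: y :: l) = delZeros ((x + y) :: l) := by
  rw [delZeros]

theorem delZeros_cons₂ (x y : ℤ) (l : List ℤ) (hy : y ≠ 0) :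
    delZeros (x :: y :: l) = x :: delZeros (y :: l) := by
  rw [delZeros.eq_def]
  split
  · rename_i h; simp at h; tauto
  · rename_i heq; cases heq; rfl
  · rename_i heq; cases heq

/-- Invariant preserved by `delZeros` on even standard expansions. -/
inductive GoodCF : List ℤ → Prop
  | nil : GoodCF []
  | single (x : ℤ) : x ≠ 0 → Even x → GoodCF [x]
  | consZero (x y : ℤ) (l : List ℤ) : x ≠ 0 → Even x → (y = 2 ∨ y = -2) →
      (0 < x ↔ 0 < y) → GoodCF (y :: l) → GoodCF (x :: 0 :: y :: l)
  | cons (x y : ℤ) (l : List ℤ) : x ≠ 0 → Even x → y ≠ 0 → GoodCF (y :: l) →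
      GoodCF (x :: y :: l)

lemma GoodCF.merge {x y : ℤ} {l : List ℤ} (h : GoodCF (x :: 0 :: y :: l)) :
    GoodCF ((x + y) :: l) := by
  cases h with
  | consZero _ _ _ hx he hy hs hg =>
    have hxy : x + y ≠ 0 := by rcases hy with rfl | rfl <;> omega
    have hexy : Even (x + y) := by
      rcases he with ⟨r, rfl⟩
      rcases hy with rfl | rfl
      · exact ⟨r + 1, by ring⟩
      · exact ⟨r - 1, by ring⟩
    have hsxy : 0 < x + y ↔ 0 < x := by rcases hy with rfl | rfl <;> omega
    cases hg with
    | single _ h1 h2 => exact GoodCF.single _ hxy hexy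
    | consZero _ z l' h1 h2 hz hs' hg' =>
      exact GoodCF.consZero _ _ _ hxy hexy hz (by omega) hg'
    | cons _ z l' h1 h2 hz hg' =>
      exact GoodCF.cons _ _ _ hxy hexy hz hg'
  | cons _ _ _ _ _ hy _ => exact absurd rfl hy

lemma delZeros_main : ∀ (N : ℕ) (l : List ℤ), l.length ≤ N → GoodCF l →
    (∀ x ∈ delZeros l, x ≠ 0 ∧ Even x) ∧
      (delZeros l).length + 2 * l.count 0 = l.length ∧
      ((delZeros l).map Int.natAbs).sum = (l.map Int.natAbs).sum := by
  intro N
  induction N with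
  | zero =>
    intro l hl _
    have : l = [] := List.length_eq_zero_iff.mp (Nat.le_zero.mp hl)
    subst this
    simp [delZeros_nil]
  | succ n IH =>
    intro l hl hg
    cases hg with
    | nil => simp [delZeros_nil]
    | single x hx he =>
      simp only [delZeros_singleton]
      refine ⟨by simpa using ⟨hx, he⟩, ?_, by simp⟩
      simp [List.count_cons, hx]
    | consZero x y l' hx he hy hs hg' =>
      have hxy : x + y ≠ 0 := by rcases hy with rfl | rfl <;> omega
      have hmerge : GoodCF ((x + y) :: l') :=
        GoodCF.merge (GoodCF.consZero x y l' hx he hy hs hg')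
      have hlen : ((x + y) :: l').length ≤ n := by
        simp at hl ⊢; omega
      obtain ⟨h1, h2, h3⟩ := IH _ hlen hmerge
      rw [delZeros_cons_zero]
      refine ⟨h1, ?_, ?_⟩
      · have hcount : (x :: 0 :: y :: l').count 0 = ((x + y) :: l').count 0 + 1 := by
          simp [List.count_cons, hx, hxy]
          rcases hy with rfl | rfl <;> simp
        simp only [hcount, List.length_cons] at h2 ⊢
        omega
      · have habs : (x + y).natAbs = x.natAbs + y.natAbs := by
          rcases hy with rfl | rfl <;> omega
        simp only [List.map_cons, List.sum_cons] at h3 ⊢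
        rw [h3]
        simp [habs]
        omega
    | cons x y l' hx he hy hg' =>
      have hlen : (y :: l').length ≤ n := by simp at hl ⊢; omega
      obtain ⟨h1, h2, h3⟩ := IH _ hlen hg'
      rw [delZeros_cons₂ x y l' hy]
      refine ⟨?_, ?_, ?_⟩
      · intro z hz
        rcases List.mem_cons.mp hz with rfl | hz
        · exact ⟨hx, he⟩
        · exact h1 z hz
      · have hc : (x :: y :: l').count 0 = (y :: l').count 0 := by
          simp [List.count_cons, hx]
        rw [hc]
        simp only [List.length_cons] at h2 ⊢
        omega
      · simp only [List.map_cons, List.sum_cons] at h3 ⊢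
        omega

lemma good_of : ∀ (N : ℕ) (l : List ℤ), l.length ≤ N →
    (∀ x ∈ l, x = -2 ∨ x = 0 ∨ x = 2) →
    (∀ i : ℕ, l[i]? = some 0 →
      1 ≤ i ∧ i + 1 < l.length ∧
        ((l[i - 1]? = some 2 ∧ l[i + 1]? = some 2) ∨
          (l[i - 1]? = some (-2) ∧ l[i + 1]? = some (-2)))) →
    GoodCF l := by
  intro N
  induction N with
  | zero =>
    intro l hl _ _
    have : l = [] := List.length_eq_zero_iff.mp (Nat.le_zero.mp hl)
    subst this; exact GoodCF.nil
  | succ n IH =>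
    intro l hl hval hz
    match l with
    | [] => exact GoodCF.nil
    | [x] =>
      have hx : x ≠ 0 := by
        intro h; subst h
        have := (hz 0 (by simp)).1; omega
      have he : Even x := by rcases hval x (by simp) with rfl | rfl | rfl <;> first | decide | exact absurd rfl hx
      exact GoodCF.single x hx he
    | x :: y :: t =>
      have hx : x ≠ 0 := by
        intro h; subst h
        have := (hz 0 (by simp)).1; omega
      have he : Even x := by rcases hval x (by simp) with rfl | rfl | rfl <;> first | decide | exact absurd rfl hx
      by_cases hy : y = 0
      · subst hy
        -- zero at index 1; neighbors x and t.head
        obtain ⟨-, hlt, hnb⟩ := hz 1 (by simp)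
        match t with
        | [] => simp at hlt
        | z :: t' =>
          have hxz : (x = 2 ∧ z = 2) ∨ (x = -2 ∧ z = -2) := by
            simpa using hnb
          have hzne : z ≠ 0 := by rcases hxz with ⟨rfl, rfl⟩ | ⟨rfl, rfl⟩ <;> decide
          have hg : GoodCF (z :: t') := by
            apply IH
            · simp at hl ⊢; omega
            · intro w hw; exact hval w (by simp [hw])
            · intro i hi
              have hi0 : i ≠ 0 := by
                intro h; subst h; simp at hi; exact hzne hi
              obtain ⟨j, rfl⟩ : ∃ j, i = j + 1 := ⟨i - 1, by omega⟩
              have hi' : (x :: (0:ℤ) :: z :: t')[j + 3]? = some 0 := by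
                simpa using hi
              obtain ⟨-, hlt', hnb'⟩ := hz (j + 3) hi'
              refine ⟨by omega, by simp at hlt' ⊢ ; all_goals omega, ?_⟩
              simpa using hnb'
          refine GoodCF.consZero x z t' hx he ?_ ?_ hg
          · rcases hxz with ⟨rfl, rfl⟩ | ⟨rfl, rfl⟩ <;> simp
          · rcases hxz with ⟨rfl, rfl⟩ | ⟨rfl, rfl⟩ <;> omega
      · have hg : GoodCF (y :: t) := by
          apply IH
          · simp at hl ⊢; omega
          · intro w hw; exact hval w (by simp [hw])
          · intro i hi
            have hi0 : i ≠ 0 := by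
              intro h; subst h; simp at hi; exact hy hi
            obtain ⟨j, rfl⟩ : ∃ j, i = j + 1 := ⟨i - 1, by omega⟩
            have hi' : (x :: y :: t)[j + 2]? = some 0 := by simpa using hi
            obtain ⟨-, hlt', hnb'⟩ := hz (j + 2) hi'
            refine ⟨by omega, by simp at hlt' ⊢ ; all_goals omega, ?_⟩
            simpa using hnb'
        exact GoodCF.cons x y t hx he hy hg

lemma abs_sum_eq (l : List ℤ) (hval : ∀ x ∈ l, x = -2 ∨ x = 0 ∨ x = 2) :
    (l.map Int.natAbs).sum + 2 * l.count 0 = 2 * l.length := by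
  induction l with
  | nil => simp
  | cons x t ih =>
    have ht := ih (fun w hw => hval w (by simp [hw]))
    rcases hval x (by simp) with rfl | rfl | rfl <;>
      simp [List.count_cons] at ht ⊢ <;> omega

/-- For an even standard continued fraction expansion `a` of length `2n` with `ℓ` zeros,
deleting the zeros produces a sequence `a'` of nonzero even integers of length
`2n' = 2(n - ℓ)` with `Σ|a'ᵢ| = 2n + 2n'`. -/
theorem delZeros_even_standard (n : ℕ) (a : List ℤ)
    (hlen : a.length = 2 * n)
    (hval : ∀ x ∈ a, x = -2 ∨ x = 0 ∨ x = 2)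
    (hz : ∀ i : ℕ, a[i]? = some 0 →
      1 ≤ i ∧ i + 1 < a.length ∧
        ((a[i - 1]? = some 2 ∧ a[i + 1]? = some 2) ∨
          (a[i - 1]? = some (-2) ∧ a[i + 1]? = some (-2)))) :
    (∀ x ∈ delZeros a, x ≠ 0 ∧ Even x) ∧
      (delZeros a).length = 2 * (n - a.count 0) ∧
      ((delZeros a).map Int.natAbs).sum = 2 * n + (delZeros a).length := by
  have hg : GoodCF a := good_of a.length a le_rfl hval hz
  obtain ⟨h1, h2, h3⟩ := delZeros_main a.length a le_rfl hg
  have habs := abs_sum_eq a hval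
  refine ⟨h1, by omega, by omega⟩
end
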